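/- arXiv:1512.07661 — 2 statements merged into one kernel-verified Lean document; each statement's English description precedes it below -/
import Mathlib

section
/- Let n be a positive integer and let g₋₁, g₀, g₁ be complex subspaces of the n×n complex matrices such that, writing ⁅P,Q⁆ = PQ − QP, one has ⁅g_i, g_j⁆ ⊆ g_{i+j} for all i, j ∈ {−1,0,1} with i+j ∈ {−1,0,1}, and ⁅g_i, g_j⁆ = 0 whenever |i+j| > 1 (in particular g₁ and g₋₁ are abelian). Let Z' : ℝ → g₋₁, Y : ℝ → g₀, Z : ℝ → g₁ be continuous, and suppose W : ℝ → g₋₁, V : ℝ → g₁ and y : ℝ → Matrix n n ℂ satisfy: (i) y(t) is invertible and y(t)⁻¹·Z(t)·y(t) ∈ g₁ for all t; (ii) W has derivative Z'(t) − ⁅W(t), Y(t)⁆ + (1/2)⁅W(t), ⁅W(t), Z(t)⁆⁆ at every t; (iii) y has derivative (Y(t) − ⁅W(t), Z(t)⁆)·y(t) at every t; (iv) V has derivative y(t)⁻¹·Z(t)·y(t) at every t; (v) W(0) = 0, y(0) = 1, V(0) = 0. Then the function x(t) = exp(W(t))·y(t)·exp(V(t)) satisfies x(0) = 1 and x has derivative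 (Z'(t) + Y(t) + Z(t))·x(t) at every t. -/
open NormedSpace

attribute [local instance]
  Matrix.linftyOpNormedAddCommGroup Matrix.linftyOpNormedSpace
  Matrix.linftyOpNormedRing Matrix.linftyOpNormedAlgebra

/-!
Differentiating `x = exp W · y · exp V` by the product rule gives
`x' = (W' · exp W + exp W · A) · y · exp V` with `A = Y + Z - ⁅W, Z⁆`: the factor `exp W` has
logarithmic derivative `W'` because `g₋₁` is abelian, and `y · V' = Z · y`. Since `ad W` sends
`g₁ → g₀ → g₋₁ → 0`, we have `ad W ^ 3 A = 0`, so the conjugate `exp W · A · exp (-W)` is the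
truncated series `A + ⁅W, A⁆ + ½ ⁅W, ⁅W, A⁆⁆`; the Riccati equation for `W` is exactly what makes
`W'` plus this conjugate equal to `Z' + Y + Z`.
-/

section ThreeStepGrading

variable {R 𝔸 : Type*} [Semiring R] [Ring 𝔸] [Module R 𝔸]

structure IsThreeStepGrading (g : ℤ → Submodule R 𝔸) : Prop where
  lie_mem : ∀ i ∈ ({-1, 0, 1} : Set ℤ), ∀ j ∈ ({-1, 0, 1} : Set ℤ),
    i + j ∈ ({-1, 0, 1} : Set ℤ) → ∀ x ∈ g i, ∀ y ∈ g j, ⁅x, y⁆ ∈ g (i + j)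
  lie_eq_zero : ∀ i ∈ ({-1, 0, 1} : Set ℤ), ∀ j ∈ ({-1, 0, 1} : Set ℤ),
    1 < |i + j| → ∀ x ∈ g i, ∀ y ∈ g j, ⁅x, y⁆ = 0

namespace IsThreeStepGrading

variable {g : ℤ → Submodule R 𝔸}

theorem commute_of_mem_neg_one (hg : IsThreeStepGrading g) {a b : 𝔸} (ha : a ∈ g (-1))
    (hb : b ∈ g (-1)) : Commute a b :=
  commute_iff_lie_eq.2 <| hg.lie_eq_zero (-1) (by simp) (-1) (by simp) (by norm_num) a ha b hb

theorem commute_of_mem_one (hg : IsThreeStepGrading g) {a b : 𝔸} (ha : a ∈ g 1)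
    (hb : b ∈ g 1) : Commute a b :=
  commute_iff_lie_eq.2 <| hg.lie_eq_zero 1 (by simp) 1 (by simp) (by norm_num) a ha b hb

theorem lie_lie_eq_zero_of_mem_neg_one_of_mem_zero (hg : IsThreeStepGrading g) {W Y : 𝔸}
    (hW : W ∈ g (-1)) (hY : Y ∈ g 0) : ⁅W, ⁅W, Y⁆⁆ = 0 := by
  have hWY : ⁅W, Y⁆ ∈ g (-1) := by
    simpa using hg.lie_mem (-1) (by simp) 0 (by simp) (by norm_num) W hW Y hY
  exact hg.lie_eq_zero (-1) (by simp) (-1) (by simp) (by norm_num) W hW _ hWY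

theorem lie_lie_lie_eq_zero_of_mem_neg_one_of_mem_one (hg : IsThreeStepGrading g) {W Z : 𝔸}
    (hW : W ∈ g (-1)) (hZ : Z ∈ g 1) : ⁅W, ⁅W, ⁅W, Z⁆⁆⁆ = 0 := by
  have hWZ : ⁅W, Z⁆ ∈ g 0 := by
    simpa using hg.lie_mem (-1) (by simp) 1 (by simp) (by norm_num) W hW Z hZ
  exact hg.lie_lie_eq_zero_of_mem_neg_one_of_mem_zero hW hWZ

end IsThreeStepGrading

end ThreeStepGrading

section Development

variable {𝕜 𝔸 : Type*} [NontriviallyNormedField 𝕜] [NormedRing 𝔸] [NormedAlgebra 𝕜 𝔸]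

theorem hasDerivAt_mul_mul_of_development {E y F : 𝕜 → 𝔸} {D A K Z S : 𝔸} {t : 𝕜}
    (hE : HasDerivAt E (D * E t) t) (hy : HasDerivAt y (A * y t) t)
    (hF : HasDerivAt F (K * F t) t) (hK : y t * K = Z * y t)
    (hS : D * E t + E t * (A + Z) = S * E t) :
    HasDerivAt (fun s => E s * y s * F s) (S * (E t * y t * F t)) t := by
  refine ((hE.mul hy).mul hF).congr_deriv ?_
  rw [Pi.mul_apply, ← mul_assoc (E t * y t) K, mul_assoc (E t) (y t) K, hK]
  calc _ = (D * E t + E t * (A + Z)) * (y t * F t) := by noncomm_ring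
    _ = _ := by rw [hS, mul_assoc, mul_assoc (E t)]

end Development

section Exponential

variable {𝕂 𝔸 : Type*} [RCLike 𝕂] [NormedRing 𝔸] [NormedAlgebra 𝕂 𝔸] [CompleteSpace 𝔸]

theorem hasDerivAt_exp_of_commute {f : 𝕂 → 𝔸} {f' : 𝔸} {t : 𝕂} (hf : HasDerivAt f f' t)
    (hcomm : ∀ s, Commute (f s) (f t)) :
    HasDerivAt (fun s => exp (f s)) (f' * exp (f t)) t := by
  let : NormedAlgebra ℚ 𝔸 := .restrictScalars ℚ 𝕂 𝔸
  have hexp : HasDerivAt (fun s => exp (f s - f t)) f' t := by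
    have h0 : HasFDerivAt exp (1 : 𝔸 →L[𝕂] 𝔸) (f t - f t) := by
      rw [sub_self]
      exact hasFDerivAt_exp_zero
    exact h0.comp_hasDerivAt t (hf.sub_const (f t))
  refine (hexp.mul_const (exp (f t))).congr_of_eventuallyEq (.of_forall fun s => ?_)
  dsimp only
  rw [← exp_add_of_commute ((hcomm s).sub_left (.refl _)), sub_add_cancel]

theorem exp_mul_eq_of_lie_lie_lie_eq_zero {W A : 𝔸} (h : ⁅W, ⁅W, ⁅W, A⁆⁆⁆ = 0) :
    exp W * A = (A + ⁅W, A⁆ + (1 / 2 : 𝕂) • ⁅W, ⁅W, A⁆⁆) * exp W := by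
  let P : 𝕂 → 𝔸 := fun s => A + s • ⁅W, A⁆ + (s ^ 2 / 2) • ⁅W, ⁅W, A⁆⁆
  have hP : ∀ s, HasDerivAt P (⁅W, A⁆ + s • ⁅W, ⁅W, A⁆⁆) s := fun s => by
    refine (((hasDerivAt_id s).smul_const ⁅W, A⁆).const_add A |>.add
      (((hasDerivAt_pow 2 s).div_const 2).smul_const ⁅W, ⁅W, A⁆⁆)).congr_deriv ?_
    simp only [one_smul]
    module
  have hlie : ∀ s, ⁅W, P s⁆ = ⁅W, A⁆ + s • ⁅W, ⁅W, A⁆⁆ := fun s => by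
    let := LieRing.ofAssociativeRing (A := 𝔸)
    simp only [P, lie_add, lie_smul, h, smul_zero, add_zero]
  -- `P' = ⁅W, P⁆`, so conjugating `P s` back by `exp (s • W)` gives a constant curve
  have hconj : ∀ s, HasDerivAt (fun s => exp (s • -W) * P s * exp (s • W)) 0 s := fun s => by
    refine (((hasDerivAt_exp_smul_const (-W) s).mul (hP s)).mul
      (hasDerivAt_exp_smul_const' W s)).congr_deriv ?_
    rw [← hlie, Ring.lie_def, Pi.mul_apply]
    noncomm_ring
  have hconst := is_const_of_deriv_eq_zero (fun s => (hconj s).differentiableAt)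
    (fun s => (hconj s).deriv) 1 0
  simp only [P, one_smul, one_pow, zero_smul, exp_zero, one_mul, mul_one, add_zero,
    zero_pow two_ne_zero, zero_div] at hconst
  let : NormedAlgebra ℚ 𝔸 := .restrictScalars ℚ 𝕂 𝔸
  have hinv : exp W * exp (-W) = 1 := by
    rw [← exp_add_of_commute (Commute.refl W).neg_right, add_neg_cancel, exp_zero]
  conv_lhs => rw [← hconst, ← mul_assoc, ← mul_assoc, hinv, one_mul]

theorem riccati_mul_exp_add_exp_mul {W Y Z Z' : 𝔸} (hY : ⁅W, ⁅W, Y⁆⁆ = 0)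
    (hZ : ⁅W, ⁅W, ⁅W, Z⁆⁆⁆ = 0) :
    (Z' - ⁅W, Y⁆ + (1 / 2 : 𝕂) • ⁅W, ⁅W, Z⁆⁆) * exp W + exp W * (Y - ⁅W, Z⁆ + Z) =
      (Z' + Y + Z) * exp W := by
  let := LieRing.ofAssociativeRing (A := 𝔸)
  have hA : ⁅W, ⁅W, Y - ⁅W, Z⁆ + Z⁆⁆ = ⁅W, ⁅W, Z⁆⁆ := by
    simp only [lie_add, lie_sub, hY, hZ, zero_sub, neg_zero, zero_add]
  rw [exp_mul_eq_of_lie_lie_lie_eq_zero (𝕂 := 𝕂) (by rw [hA, hZ]), ← add_mul, hA]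
  congr 1
  simp only [lie_add, lie_sub]
  module

end Exponential

theorem wei_norman_cominuscule_matrix_factorization_general
    {n : ℕ}
    (g : ℤ → Submodule ℂ (Matrix (Fin n) (Fin n) ℂ))
    (hgrading : ∀ i ∈ ({-1, 0, 1} : Set ℤ), ∀ j ∈ ({-1, 0, 1} : Set ℤ),
      i + j ∈ ({-1, 0, 1} : Set ℤ) →
      ∀ x ∈ g i, ∀ y ∈ g j, ⁅x, y⁆ ∈ g (i + j))
    (habelian : ∀ i ∈ ({-1, 0, 1} : Set ℤ), ∀ j ∈ ({-1, 0, 1} : Set ℤ),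
      1 < |i + j| → ∀ x ∈ g i, ∀ y ∈ g j, ⁅x, y⁆ = 0)
    (Z' Y Z : ℝ → Matrix (Fin n) (Fin n) ℂ)
    (hYmem : ∀ t : ℝ, Y t ∈ g 0)
    (hZmem : ∀ t : ℝ, Z t ∈ g 1)
    (W V y : ℝ → Matrix (Fin n) (Fin n) ℂ)
    (hWmem : ∀ t : ℝ, W t ∈ g (-1)) (hVmem : ∀ t : ℝ, V t ∈ g 1)
    (hyunit : ∀ t : ℝ, IsUnit (y t))
    (hW : ∀ t : ℝ, HasDerivAt W
      (Z' t - ⁅W t, Y t⁆ + (1 / 2 : ℂ) • ⁅W t, ⁅W t, Z t⁆⁆) t)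
    (hy : ∀ t : ℝ, HasDerivAt y ((Y t - ⁅W t, Z t⁆) * y t) t)
    (hV : ∀ t : ℝ, HasDerivAt V ((y t)⁻¹ * Z t * y t) t)
    (hW0 : W 0 = 0) (hy0 : y 0 = 1) (hV0 : V 0 = 0)
    (x : ℝ → Matrix (Fin n) (Fin n) ℂ)
    (hx : ∀ t : ℝ, x t = exp (W t) * y t * exp (V t)) :
    x 0 = 1 ∧ ∀ t : ℝ, HasDerivAt x ((Z' t + Y t + Z t) * x t) t := by
  have hg : IsThreeStepGrading g := ⟨hgrading, habelian⟩
  refine ⟨by simp [hx, hW0, hy0, hV0], fun t => ?_⟩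
  have hE := hasDerivAt_exp_of_commute (hW t) fun s =>
    hg.commute_of_mem_neg_one (hWmem s) (hWmem t)
  have hF := hasDerivAt_exp_of_commute (hV t) fun s => hg.commute_of_mem_one (hVmem s) (hVmem t)
  have hexp := riccati_mul_exp_add_exp_mul (𝕂 := ℂ) (Z' := Z' t)
    (hg.lie_lie_eq_zero_of_mem_neg_one_of_mem_zero (hWmem t) (hYmem t))
    (hg.lie_lie_lie_eq_zero_of_mem_neg_one_of_mem_one (hWmem t) (hZmem t))
  have hyZ : y t * ((y t)⁻¹ * Z t * y t) = Z t * y t := by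
    rw [Matrix.mul_assoc, Matrix.mul_nonsing_inv_cancel_left _ _
      ((Matrix.isUnit_iff_isUnit_det _).mp (hyunit t))]
  rw [funext hx]
  exact hasDerivAt_mul_mul_of_development hE (hy t) hF hyZ hexp

/-- (Wei–Norman factorization for a cominuscule grading of a matrix
Lie algebra.)  Let `g₋₁, g₀, g₁` be complex subspaces of the `n×n` complex matrices with
`⁅gᵢ, gⱼ⁆ ⊆ g_{i+j}` for `i, j, i+j ∈ {-1,0,1}` and `⁅gᵢ, gⱼ⁆ = 0` when `|i+j| > 1`.
Let `Z' : ℝ → g₋₁`, `Y : ℝ → g₀`, `Z : ℝ → g₁` be continuous, and suppose `W : ℝ → g₋₁`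
solves the Riccati equation `W' = Z' − ⁅W,Y⁆ + ½⁅W,⁅W,Z⁆⁆`, `y` solves the development
equation `y' = (Y − ⁅W,Z⁆)·y` with `y(t)` invertible and `y⁻¹·Z·y ∈ g₁`, and
`V : ℝ → g₁` solves `V' = y⁻¹·Z·y`, with `W(0) = 0`, `y(0) = 1`, `V(0) = 0`.  Then
`x = exp(W)·y·exp(V)` satisfies `x(0) = 1` and `dx/dt = (Z' + Y + Z)·x`. -/
theorem wei_norman_cominuscule_matrix_factorization
    {n : ℕ} (hn : 0 < n)
    (g : ℤ → Submodule ℂ (Matrix (Fin n) (Fin n) ℂ))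
    (hgrading : ∀ i ∈ ({-1, 0, 1} : Set ℤ), ∀ j ∈ ({-1, 0, 1} : Set ℤ),
      i + j ∈ ({-1, 0, 1} : Set ℤ) →
      ∀ x ∈ g i, ∀ y ∈ g j, ⁅x, y⁆ ∈ g (i + j))
    (habelian : ∀ i ∈ ({-1, 0, 1} : Set ℤ), ∀ j ∈ ({-1, 0, 1} : Set ℤ),
      1 < |i + j| → ∀ x ∈ g i, ∀ y ∈ g j, ⁅x, y⁆ = 0)
    (Z' Y Z : ℝ → Matrix (Fin n) (Fin n) ℂ)
    (hZ'mem : ∀ t : ℝ, Z' t ∈ g (-1)) (hYmem : ∀ t : ℝ, Y t ∈ g 0)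
    (hZmem : ∀ t : ℝ, Z t ∈ g 1)
    (hZ'cont : Continuous Z') (hYcont : Continuous Y) (hZcont : Continuous Z)
    (W V y : ℝ → Matrix (Fin n) (Fin n) ℂ)
    (hWmem : ∀ t : ℝ, W t ∈ g (-1)) (hVmem : ∀ t : ℝ, V t ∈ g 1)
    (hyunit : ∀ t : ℝ, IsUnit (y t))
    (hconj : ∀ t : ℝ, (y t)⁻¹ * Z t * y t ∈ g 1)
    (hW : ∀ t : ℝ, HasDerivAt W
      (Z' t - ⁅W t, Y t⁆ + (1 / 2 : ℂ) • ⁅W t, ⁅W t, Z t⁆⁆) t)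
    (hy : ∀ t : ℝ, HasDerivAt y ((Y t - ⁅W t, Z t⁆) * y t) t)
    (hV : ∀ t : ℝ, HasDerivAt V ((y t)⁻¹ * Z t * y t) t)
    (hW0 : W 0 = 0) (hy0 : y 0 = 1) (hV0 : V 0 = 0)
    (x : ℝ → Matrix (Fin n) (Fin n) ℂ)
    (hx : ∀ t : ℝ, x t = exp (W t) * y t * exp (V t)) :
    x 0 = 1 ∧ ∀ t : ℝ, HasDerivAt x ((Z' t + Y t + Z t) * x t) t :=
  wei_norman_cominuscule_matrix_factorization_general g hgrading habelian Z' Y Z hYmem hZmem W V y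
    hWmem hVmem hyunit hW hy hV hW0 hy0 hV0 x hx
end

section
/- Let p, q be positive integers. Let A : ℝ → Matrix p p ℂ, B : ℝ → Matrix p q ℂ, C : ℝ → Matrix q p ℂ, D : ℝ → Matrix q q ℂ be continuous, and set X(t) to be the block matrix with blocks A(t), B(t); C(t), D(t). Suppose w : ℝ → Matrix q p ℂ, a : ℝ → Matrix p p ℂ, d : ℝ → Matrix q q ℂ, v : ℝ → Matrix p q ℂ satisfy: (i) a(t) and d(t) are invertible for all t; (ii) w has derivative C(t) − w(t)·A(t) + D(t)·w(t) − w(t)·B(t)·w(t) at every t (a matrix Riccati equation); (iii) a has derivative (A(t) + B(t)·w(t))·a(t) at every t; (iv) d has derivative (D(t) − w(t)·B(t))·d(t) at every t; (v) v has derivative a(t)⁻¹·B(t)·d(t) at every t; (vi) w(0) = 0, a(0) = 1, d(0) = 1, v(0) = 0. Then the block matrix product x(t) = [[1, 0],[w(t), 1]] · [[a(t), 0],[0, d(t)]] · [[1, v(t)],[0, 1]] satisfies x(0) = 1 and x has derivative X(t)·x(t) at every t. -/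
/-!
Write `x = L M U` with `L = [[1,0],[w,1]]`, `M = [[a,0],[0,d]]`, `U = [[1,v],[0,1]]`. If
`X L = L Y + L'`, `Y M = M Z + M'` and `Z U = U'`, the Leibniz rule telescopes to
`(L M U)' = X (L M U)`. The Riccati equation for `w` is exactly what makes
`Y = [[A + B w, B], [0, D - w B]]` block upper triangular; the equations for `a` and `d` make
`M'` the diagonal part of `Y M`, and the remaining corner `B d = a v'` is carried by
`Z = [[0, v'], [0, 0]]`, which satisfies `Z U = U'`.
-/

attribute [local instance]
  Matrix.linftyOpNormedAddCommGroup Matrix.linftyOpNormedSpace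
  Matrix.linftyOpNormedRing Matrix.linftyOpNormedAlgebra

theorem HasDerivAt.mul_mul_of_intertwining {𝕜 𝔸 : Type*} [NontriviallyNormedField 𝕜]
    [NormedRing 𝔸] [NormedAlgebra 𝕜 𝔸] {L M U : 𝕜 → 𝔸} {L' M' U' X Y Z : 𝔸} {t : 𝕜}
    (hL : HasDerivAt L L' t) (hM : HasDerivAt M M' t) (hU : HasDerivAt U U' t)
    (hXL : X * L t = L t * Y + L') (hYM : Y * M t = M t * Z + M') (hZU : Z * U t = U') :
    HasDerivAt (fun s => L s * M s * U s) (X * (L t * M t * U t)) t := by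
  obtain rfl : L' = X * L t - L t * Y := eq_sub_of_add_eq' hXL.symm
  obtain rfl : M' = Y * M t - M t * Z := eq_sub_of_add_eq' hYM.symm
  subst hZU
  convert (hL.fun_mul hM).fun_mul hU using 1
  noncomm_ring

namespace Matrix

section Derivative

variable {𝕜 α : Type*} [NontriviallyNormedField 𝕜] [NormedAddCommGroup α] [NormedSpace 𝕜 α]
  {l m n o : Type*} [Fintype l] [Fintype m] [Fintype n] [Fintype o]

def fromBlocksCLM :
    (Matrix n l α × Matrix n m α × Matrix o l α × Matrix o m α) →L[𝕜]
      Matrix (n ⊕ o) (l ⊕ m) α where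
  toFun M := fromBlocks M.1 M.2.1 M.2.2.1 M.2.2.2
  map_add' M N := (fromBlocks_add ..).symm
  map_smul' c M := (fromBlocks_smul ..).symm
  cont := by fun_prop

theorem _root_.HasDerivAt.matrix_fromBlocks {A : 𝕜 → Matrix n l α} {B : 𝕜 → Matrix n m α}
    {C : 𝕜 → Matrix o l α} {D : 𝕜 → Matrix o m α} {A' B' C' D'} {t : 𝕜}
    (hA : HasDerivAt A A' t) (hB : HasDerivAt B B' t)
    (hC : HasDerivAt C C' t) (hD : HasDerivAt D D' t) :
    HasDerivAt (fun s => fromBlocks (A s) (B s) (C s) (D s)) (fromBlocks A' B' C' D') t :=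
  (fromBlocksCLM.hasFDerivAt.comp_hasDerivAt t (hA.prodMk (hB.prodMk (hC.prodMk hD))) :)

end Derivative

section Gauge

variable {R : Type*} [Ring R] {m n : Type*} [Fintype m] [Fintype n] [DecidableEq m]
  [DecidableEq n]

theorem fromBlocks_mul_fromBlocks_one_zero (A : Matrix m m R) (B : Matrix m n R)
    (C : Matrix n m R) (D : Matrix n n R) (w : Matrix n m R) :
    fromBlocks A B C D * fromBlocks 1 0 w 1 =
      fromBlocks 1 0 w 1 * fromBlocks (A + B * w) B 0 (D - w * B) +
        fromBlocks 0 0 (C - w * A + D * w - w * B * w) 0 := by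
  simp [fromBlocks_multiply, fromBlocks_add, Matrix.mul_add, Matrix.mul_sub, Matrix.mul_assoc]
  abel

theorem fromBlocks_zero_mul_fromBlocks_diag (P : Matrix m m R) (B : Matrix m n R)
    (Q : Matrix n n R) (a : Matrix m m R) (d : Matrix n n R) (v' : Matrix m n R)
    (hv' : a * v' = B * d) :
    fromBlocks P B 0 Q * fromBlocks a 0 0 d =
      fromBlocks a 0 0 d * fromBlocks 0 v' 0 0 + fromBlocks (P * a) 0 0 (Q * d) := by
  simp [fromBlocks_multiply, fromBlocks_add, hv']

theorem fromBlocks_zero_mul_fromBlocks_one (v v' : Matrix m n R) :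
    fromBlocks 0 v' 0 0 * fromBlocks (1 : Matrix m m R) v 0 (1 : Matrix n n R) =
      fromBlocks 0 v' 0 0 := by
  simp [fromBlocks_multiply]

end Gauge

end Matrix

theorem wei_norman_block_matrix_factorization_general
    {p q : ℕ}
    (A : ℝ → Matrix (Fin p) (Fin p) ℂ) (B : ℝ → Matrix (Fin p) (Fin q) ℂ)
    (C : ℝ → Matrix (Fin q) (Fin p) ℂ) (D : ℝ → Matrix (Fin q) (Fin q) ℂ)
    (X : ℝ → Matrix (Fin p ⊕ Fin q) (Fin p ⊕ Fin q) ℂ)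
    (hX : ∀ t : ℝ, X t = Matrix.fromBlocks (A t) (B t) (C t) (D t))
    (w : ℝ → Matrix (Fin q) (Fin p) ℂ) (a : ℝ → Matrix (Fin p) (Fin p) ℂ)
    (d : ℝ → Matrix (Fin q) (Fin q) ℂ) (v : ℝ → Matrix (Fin p) (Fin q) ℂ)
    (haunit : ∀ t : ℝ, IsUnit (a t))
    (hw : ∀ t : ℝ, HasDerivAt w
      (C t - w t * A t + D t * w t - w t * B t * w t) t)
    (ha : ∀ t : ℝ, HasDerivAt a ((A t + B t * w t) * a t) t)
    (hd : ∀ t : ℝ, HasDerivAt d ((D t - w t * B t) * d t) t)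
    (hv : ∀ t : ℝ, HasDerivAt v ((a t)⁻¹ * B t * d t) t)
    (hw0 : w 0 = 0) (ha0 : a 0 = 1) (hd0 : d 0 = 1) (hv0 : v 0 = 0)
    (x : ℝ → Matrix (Fin p ⊕ Fin q) (Fin p ⊕ Fin q) ℂ)
    (hx : ∀ t : ℝ, x t =
      Matrix.fromBlocks 1 0 (w t) 1 * Matrix.fromBlocks (a t) 0 0 (d t) *
        Matrix.fromBlocks 1 (v t) 0 1) :
    x 0 = 1 ∧ ∀ t : ℝ, HasDerivAt x (X t * x t) t := by
  refine ⟨by simp [hx, hw0, ha0, hd0, hv0, Matrix.fromBlocks_one], fun t => ?_⟩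
  have hav : a t * ((a t)⁻¹ * B t * d t) = B t * d t := by
    rw [Matrix.mul_assoc, Matrix.mul_nonsing_inv_cancel_left _ _
      ((Matrix.isUnit_iff_isUnit_det _).mp (haunit t))]
  have hconst {m n : Type} [Fintype m] [Fintype n] (c : Matrix m n ℂ) :
      HasDerivAt (fun _ : ℝ => c) 0 t := hasDerivAt_const t c
  rw [show x = _ from funext hx, hX t]
  exact HasDerivAt.mul_mul_of_intertwining
    ((hconst 1).matrix_fromBlocks (hconst 0) (hw t) (hconst 1))
    ((ha t).matrix_fromBlocks (hconst 0) (hconst 0) (hd t))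
    ((hconst 1).matrix_fromBlocks (hv t) (hconst 0) (hconst 1))
    (Matrix.fromBlocks_mul_fromBlocks_one_zero ..)
    (Matrix.fromBlocks_zero_mul_fromBlocks_diag _ _ _ _ _ _ hav)
    (Matrix.fromBlocks_zero_mul_fromBlocks_one ..)

/-- (Wei–Norman reduction for `GL(p+q, ℂ)` with the block
upper-triangular cominuscule parabolic.)  Let `X(t)` be the block matrix
`[[A(t),B(t)],[C(t),D(t)]]` with continuous blocks.  Suppose `w` solves the matrix
Riccati equation `w' = C − wA + Dw − wBw`, `a` and `d` solve the block-diagonal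
developments `a' = (A + Bw)a` and `d' = (D − wB)d` with `a(t)`, `d(t)` invertible,
`v` solves `v' = a⁻¹ B d`, with `w(0)=0`, `a(0)=1`, `d(0)=1`, `v(0)=0`.  Then
`x = [[1,0],[w,1]]·[[a,0],[0,d]]·[[1,v],[0,1]]` satisfies `x(0)=1` and `x' = X·x`. -/
theorem wei_norman_block_matrix_factorization
    {p q : ℕ} (hp : 0 < p) (hq : 0 < q)
    (A : ℝ → Matrix (Fin p) (Fin p) ℂ) (B : ℝ → Matrix (Fin p) (Fin q) ℂ)
    (C : ℝ → Matrix (Fin q) (Fin p) ℂ) (D : ℝ → Matrix (Fin q) (Fin q) ℂ)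
    (hA : Continuous A) (hB : Continuous B) (hC : Continuous C) (hD : Continuous D)
    (X : ℝ → Matrix (Fin p ⊕ Fin q) (Fin p ⊕ Fin q) ℂ)
    (hX : ∀ t : ℝ, X t = Matrix.fromBlocks (A t) (B t) (C t) (D t))
    (w : ℝ → Matrix (Fin q) (Fin p) ℂ) (a : ℝ → Matrix (Fin p) (Fin p) ℂ)
    (d : ℝ → Matrix (Fin q) (Fin q) ℂ) (v : ℝ → Matrix (Fin p) (Fin q) ℂ)
    (haunit : ∀ t : ℝ, IsUnit (a t)) (hdunit : ∀ t : ℝ, IsUnit (d t))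
    (hw : ∀ t : ℝ, HasDerivAt w
      (C t - w t * A t + D t * w t - w t * B t * w t) t)
    (ha : ∀ t : ℝ, HasDerivAt a ((A t + B t * w t) * a t) t)
    (hd : ∀ t : ℝ, HasDerivAt d ((D t - w t * B t) * d t) t)
    (hv : ∀ t : ℝ, HasDerivAt v ((a t)⁻¹ * B t * d t) t)
    (hw0 : w 0 = 0) (ha0 : a 0 = 1) (hd0 : d 0 = 1) (hv0 : v 0 = 0)
    (x : ℝ → Matrix (Fin p ⊕ Fin q) (Fin p ⊕ Fin q) ℂ)
    (hx : ∀ t : ℝ, x t =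
      Matrix.fromBlocks 1 0 (w t) 1 * Matrix.fromBlocks (a t) 0 0 (d t) *
        Matrix.fromBlocks 1 (v t) 0 1) :
    x 0 = 1 ∧ ∀ t : ℝ, HasDerivAt x (X t * x t) t :=
  wei_norman_block_matrix_factorization_general A B C D X hX w a d v haunit hw ha hd hv hw0 ha0 hd0
    hv0 x hx
end
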